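/- arXiv:1707.00332 — 2 statements merged into one kernel-verified Lean document; each statement's English description precedes it below -/
import Mathlib

section
/- With q = (s_k(1-p_k) + s_{k-1}(1-p_{k-1}))/(s_k + s_{k-1}) (the probability of no output in one round of the Two-Coin algorithm), we have (s_k/(s_k+s_{k-1})) · p_k · Σ_{i=0}^∞ q^i = s_k p_k/(s_k p_k + s_{k-1} p_{k-1}). -/
/-- The geometric-series identity for the Two-Coin algorithm:
with `q = (s_k(1-p_k) + s_{k-1}(1-p_{k-1}))/(s_k + s_{k-1})` the probability of no output
in one round, `(s_k/(s_k+s_{k-1})) · p_k · Σ_{i=0}^∞ q^i = s_k p_k/(s_k p_k + s_{k-1} p_{k-1})`. -/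
theorem two_coin_geometric_series
    (sk sk1 pk pk1 : ℝ)
    (hsk : 0 < sk) (hsk1 : 0 < sk1)
    (hpk0 : 0 < pk) (hpk1 : pk ≤ 1)
    (hpk10 : 0 < pk1) (hpk11 : pk1 ≤ 1)
    (q : ℝ) (hq : q = (sk * (1 - pk) + sk1 * (1 - pk1)) / (sk + sk1)) :
    (sk / (sk + sk1)) * pk * (∑' i : ℕ, q ^ i)
      = sk * pk / (sk * pk + sk1 * pk1) := by
  have hs : 0 < sk + sk1 := by linarith
  have hd : 0 < sk * pk + sk1 * pk1 := by positivity
  have h1q : 1 - q = (sk * pk + sk1 * pk1) / (sk + sk1) := by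
    rw [hq]; field_simp; ring
  have hq0 : 0 ≤ q := by
    rw [hq]
    apply div_nonneg _ hs.le
    have : 0 ≤ sk * (1 - pk) := by nlinarith
    nlinarith
  have hq1 : q < 1 := by
    have : 0 < 1 - q := by rw [h1q]; positivity
    linarith
  rw [tsum_geometric_of_lt_one hq0 hq1, h1q]
  field_simp
end

section
/- Let N ∼ Poisson(μ) and, given N = K, let U_1, …, U_K be i.i.d. Uniform(0,t), all independent of a bounded measurable function path s ↦ f(s) on [0,t] with f(s) ≤ b for all s. Then E[ e^{(μ−bt)} μ^{−N} ∏_{l=1}^{N} (b − f(U_l)) · t^N ] = exp(−∫_0^t f(s) ds). -/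
/-!
Conditionally on `N = k`, independence factorises the mean of the product into `a ^ k`, where
`a = (b t - ∫₀ᵗ f) / μ` is the mean of one factor `(t / μ) (b - f(U))`. Averaging over `N` gives
the Poisson generating function `E[a ^ N] = exp (μ (a - 1)) = exp (b t - ∫₀ᵗ f - μ)`, and the
prefactor `exp (μ - b t)` cancels everything but `exp (-∫₀ᵗ f)`. The conditioning is done in
`ℝ≥0∞`, where Tonelli needs no integrability of the random product.
-/

open MeasureTheory ProbabilityTheory Finset

open scoped ENNReal NNReal Nat

theorem ProbabilityTheory.IndepFun.lintegral_comp_eq_lintegral_lintegral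
    {Ω α β : Type*} [MeasurableSpace Ω] [MeasurableSpace α] [MeasurableSpace β]
    {μ : Measure Ω} [IsFiniteMeasure μ] {X : Ω → α} {Y : Ω → β}
    (hXY : IndepFun X Y μ) (hX : Measurable X) (hY : Measurable Y)
    {G : α → β → ℝ≥0∞} (hG : Measurable (Function.uncurry G)) :
    ∫⁻ ω, G (X ω) (Y ω) ∂μ = ∫⁻ x, ∫⁻ ω, G x (Y ω) ∂μ ∂(μ.map X) := by
  change ∫⁻ ω, Function.uncurry G (X ω, Y ω) ∂μ = _
  rw [← lintegral_map hG (hX.prodMk hY),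
    (indepFun_iff_map_prod_eq_prod_map_map hX.aemeasurable hY.aemeasurable).1 hXY,
    lintegral_prod _ hG.aemeasurable]
  congr! with x
  exact lintegral_map (hG.comp measurable_prodMk_left) hY

theorem lintegral_poissonMeasure (r : ℝ≥0) (h : ℕ → ℝ≥0∞) :
    ∫⁻ n, h n ∂poissonMeasure r
      = ∑' n, ENNReal.ofReal (Real.exp (-r) * r ^ n / n !) * h n := by
  simp [poissonMeasure, lintegral_sum_measure, lintegral_smul_measure]

theorem hasSum_poissonMeasure_mul_pow (r : ℝ≥0) (a : ℝ) :
    HasSum (fun n : ℕ ↦ Real.exp (-r) * r ^ n / n ! * a ^ n) (Real.exp (r * (a - 1))) := by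
  have h := (NormedSpace.expSeries_div_hasSum_exp ((r : ℝ) * a)).mul_left (Real.exp (-r))
  rw [← Real.exp_eq_exp_ℝ, ← Real.exp_add] at h
  rw [show (r : ℝ) * (a - 1) = -r + r * a by ring]
  exact h.congr_fun fun n ↦ by ring

theorem measurable_uncurry_prod_range {M : Type*} [CommMonoid M] [MeasurableSpace M]
    [MeasurableMul₂ M] :
    Measurable (Function.uncurry fun (k : ℕ) (x : ℕ → M) ↦ ∏ l ∈ range k, x l) :=
  measurable_from_prod_countable_right fun k ↦
    Finset.measurable_prod (range k) fun l _ ↦ measurable_pi_apply l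

theorem integral_inv_smul_restrict_Icc {t : ℝ} (ht : 0 ≤ t) (g : ℝ → ℝ) :
    ∫ x, g x ∂((ENNReal.ofReal t)⁻¹ • volume.restrict (Set.Icc 0 t))
      = t⁻¹ * ∫ x in (0 : ℝ)..t, g x := by
  rw [integral_smul_measure, integral_Icc_eq_integral_Ioc, ← intervalIntegral.integral_of_le ht,
    ENNReal.toReal_inv, ENNReal.toReal_ofReal ht, smul_eq_mul]

section PoissonProduct

variable {Ω : Type*} [MeasurableSpace Ω] {μ : Measure Ω} [IsProbabilityMeasure μ] {r : ℝ≥0}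
  {N : Ω → ℕ}

theorem lintegral_prod_range_of_poissonMeasure {W : ℕ → Ω → ℝ≥0∞} {a : ℝ} (ha : 0 ≤ a)
    (hN : Measurable N) (hW : ∀ l, Measurable (W l)) (hNlaw : μ.map N = poissonMeasure r)
    (hWind : iIndepFun W μ) (hNW : IndepFun N (fun ω l ↦ W l ω) μ)
    (hWmean : ∀ l, ∫⁻ ω, W l ω ∂μ = ENNReal.ofReal a) :
    ∫⁻ ω, ∏ l ∈ range (N ω), W l ω ∂μ = ENNReal.ofReal (Real.exp (r * (a - 1))) := by
  have hpgf := hasSum_poissonMeasure_mul_pow r a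
  rw [hNW.lintegral_comp_eq_lintegral_lintegral hN (measurable_pi_lambda _ hW)
      measurable_uncurry_prod_range, hNlaw, lintegral_poissonMeasure, ← hpgf.tsum_eq,
    ENNReal.ofReal_tsum_of_nonneg (fun n ↦ by positivity) hpgf.summable]
  congr! with n
  rw [lintegral_prod_eq_prod_lintegral_of_indepFun _ _ hWind hW, ENNReal.ofReal_mul (by positivity), ENNReal.ofReal_pow ha]
  simp only [hWmean, prod_const, card_range]

theorem integral_prod_range_of_poissonMeasure {Y : ℕ → Ω → ℝ} {a : ℝ}
    (hN : Measurable N) (hY : ∀ l, Measurable (Y l)) (hY_nonneg : ∀ l ω, 0 ≤ Y l ω)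
    (hY_int : ∀ l, Integrable (Y l) μ) (hNlaw : μ.map N = poissonMeasure r)
    (hYind : iIndepFun Y μ) (hNY : IndepFun N (fun ω l ↦ Y l ω) μ)
    (hYmean : ∀ l, ∫ ω, Y l ω ∂μ = a) :
    ∫ ω, ∏ l ∈ range (N ω), Y l ω ∂μ = Real.exp (r * (a - 1)) := by
  have ha : 0 ≤ a := hYmean 0 ▸ integral_nonneg (hY_nonneg 0)
  have hprod : Measurable fun ω ↦ ∏ l ∈ range (N ω), Y l ω :=
    measurable_uncurry_prod_range.comp (hN.prodMk (measurable_pi_lambda _ hY))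
  rw [integral_eq_lintegral_of_nonneg_ae
      (ae_of_all _ fun ω ↦ prod_nonneg fun l _ ↦ hY_nonneg l ω) hprod.aestronglyMeasurable]
  simp_rw [ENNReal.ofReal_prod_of_nonneg fun l _ ↦ hY_nonneg l _]
  rw [lintegral_prod_range_of_poissonMeasure ha hN (fun l ↦ (hY l).ennreal_ofReal) hNlaw
      (hYind.comp _ fun _ ↦ ENNReal.measurable_ofReal)
      (hNY.comp measurable_id (measurable_pi_lambda _ fun l ↦
        ENNReal.measurable_ofReal.comp (measurable_pi_apply l)))
      fun l ↦ by rw [← ofReal_integral_eq_lintegral_ofReal (hY_int l)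
        (ae_of_all _ (hY_nonneg l)), hYmean],
    ENNReal.toReal_ofReal (Real.exp_nonneg _)]

end PoissonProduct

/-- The Poisson estimator identity (eq. is7): with `N ∼ Poisson(μpar)`, i.i.d.
`U_l ∼ Uniform(0,t)` independent of `N`, and a bounded measurable `f ≤ b`,
`E[ e^{μpar−bt} ∏_{l<N} (t/μpar)(b − f(U_l)) ] = exp(−∫_0^t f(s) ds)`. -/
theorem poisson_estimator
    {Ω : Type*} [MeasurableSpace Ω] (μ : Measure Ω) [IsProbabilityMeasure μ]
    (t : ℝ) (ht : 0 < t) (μpar : ℝ) (hμ : 0 < μpar)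
    (b c : ℝ) (f : ℝ → ℝ) (hfmeas : Measurable f)
    (hfb : ∀ s, f s ≤ b) (hfc : ∀ s, c ≤ f s)
    (N : Ω → ℕ) (U : ℕ → Ω → ℝ)
    (hNmeas : Measurable N) (hUmeas : ∀ l, Measurable (U l))
    (hNlaw : Measure.map N μ = poissonMeasure μpar.toNNReal)
    (hUlaw : ∀ l, Measure.map (U l) μ
      = (ENNReal.ofReal t)⁻¹ • volume.restrict (Set.Icc (0 : ℝ) t))
    (hUiid : iIndepFun U μ)
    (hNU : IndepFun N (fun ω => fun l => U l ω) μ) :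
    ∫ ω, Real.exp (μpar - b * t) * ∏ l ∈ range (N ω), (t / μpar) * (b - f (U l ω)) ∂μ
      = Real.exp (-∫ s in (0 : ℝ)..t, f s) := by
  set g : ℝ → ℝ := fun x ↦ t / μpar * (b - f x) with hg_def
  have hg : Measurable g := by fun_prop
  have hg_nonneg : ∀ x, 0 ≤ g x := fun x ↦ mul_nonneg (by positivity) (sub_nonneg.2 (hfb x))
  have hf_int : IntervalIntegrable f volume 0 t :=
    intervalIntegrable_iff.2 <| Measure.integrableOn_of_bounded (M := max |c| |b|)
      measure_Ioc_lt_top.ne hfmeas.aestronglyMeasurable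
      (ae_of_all _ fun x ↦ abs_le_max_abs_abs (hfc x) (hfb x))
  have hgU_int : ∀ l, Integrable (fun ω ↦ g (U l ω)) μ := fun l ↦
    .of_bound (hg.comp (hUmeas l)).aestronglyMeasurable (t / μpar * (b - c))
      (ae_of_all _ fun ω ↦ by
        rw [Real.norm_of_nonneg (hg_nonneg _)]
        exact mul_le_mul_of_nonneg_left (by linarith [hfc (U l ω)]) (by positivity))
  have hgU_mean : ∀ l, ∫ ω, g (U l ω) ∂μ = (b * t - ∫ s in (0 : ℝ)..t, f s) / μpar := by
    intro l
    rw [← integral_map (hUmeas l).aemeasurable hg.aestronglyMeasurable, hUlaw l,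
      integral_inv_smul_restrict_Icc ht.le, hg_def, intervalIntegral.integral_const_mul,
      intervalIntegral.integral_sub intervalIntegrable_const hf_int,
      intervalIntegral.integral_const, sub_zero, smul_eq_mul]
    field_simp
  calc _ = Real.exp (μpar - b * t) * ∫ ω, ∏ l ∈ range (N ω), g (U l ω) ∂μ :=
        integral_const_mul _ _
    _ = Real.exp (μpar - b * t)
          * Real.exp (μpar * ((b * t - ∫ s in (0 : ℝ)..t, f s) / μpar - 1)) := by
        rw [integral_prod_range_of_poissonMeasure (Y := fun l ω ↦ g (U l ω)) hNmeas
          (fun l ↦ hg.comp (hUmeas l)) (fun l ω ↦ hg_nonneg _) hgU_int hNlaw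
          (hUiid.comp _ fun _ ↦ hg)
          (hNU.comp measurable_id
            (measurable_pi_lambda _ fun l ↦ hg.comp (measurable_pi_apply l)))
          hgU_mean, Real.coe_toNNReal _ hμ.le]
    _ = _ := by
        rw [← Real.exp_add]
        congr 1
        field_simp
        ring
end
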